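/- If λ ≥ ‖Aᵀ b‖∞, then x = 0 is a global minimizer of the lasso objective (1/2)‖A x − b‖² + λ‖x‖₁. -/
import Mathlib


open Matrix

open Finset

theorem lasso_zero_minimizer (m n : ℕ) (A : Matrix (Fin m) (Fin n) ℝ)
    (b : Fin m → ℝ) (lam : ℝ) (hlam : 0 ≤ lam)
    (h : ∀ j, |Aᵀ.mulVec b j| ≤ lam) :
    ∀ x : Fin n → ℝ,
      (1/2) * ∑ i, (b i)^2 ≤ (1/2) * ∑ i, (A.mulVec x i - b i)^2 + lam * ∑ j, |x j| := by
  intro x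
  have key : ∑ i, A.mulVec x i * b i = ∑ j, x j * Aᵀ.mulVec b j := by
    simp only [Matrix.mulVec, dotProduct, Matrix.transpose_apply,
      Finset.sum_mul, Finset.mul_sum]
    rw [Finset.sum_comm]
    congr 1; ext j; congr 1; ext i; ring
  have hb : ∑ i, A.mulVec x i * b i ≤ lam * ∑ j, |x j| := by
    rw [key, Finset.mul_sum]
    apply Finset.sum_le_sum
    intro j _
    calc x j * Aᵀ.mulVec b j ≤ |x j * Aᵀ.mulVec b j| := le_abs_self _
      _ = |x j| * |Aᵀ.mulVec b j| := abs_mul _ _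
      _ ≤ |x j| * lam := by
          exact mul_le_mul_of_nonneg_left (h j) (abs_nonneg _)
      _ = lam * |x j| := mul_comm _ _
  have expand : ∑ i, (A.mulVec x i - b i)^2
      = ∑ i, (A.mulVec x i)^2 - 2 * ∑ i, A.mulVec x i * b i + ∑ i, (b i)^2 := by
    simp only [sub_sq]
    rw [Finset.sum_add_distrib, Finset.sum_sub_distrib]
    simp only [mul_assoc]
    rw [← Finset.mul_sum]
  have hsq : 0 ≤ ∑ i, (A.mulVec x i)^2 :=
    Finset.sum_nonneg fun i _ => sq_nonneg _
  linarith
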